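/- Let A ∈ ℂ^{2n×2n} be Hermitian with tr A = 0. Then there exists a unitary matrix U ∈ ℂ^{2n×2n} with UᵀJU = J (complex symplectic), where J = [[0, I_n],[−I_n, 0]], such that U*AU is hollow. -/

import Mathlib

open Matrix Complex

noncomputable def dftM (n : ℕ) : Matrix (Fin n) (Fin n) ℂ :=
  Matrix.of fun j k =>
    Complex.exp (2 * Real.pi * Complex.I * ((j : ℕ) * (k : ℕ)) / n) * ((Real.sqrt n : ℝ) : ℂ)⁻¹

lemma conj_dftM (n : ℕ) (j k : Fin n) :
    (starRingEnd ℂ) (dftM n j k)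
      = Complex.exp (-(2 * Real.pi * Complex.I * ((j : ℕ) * (k : ℕ)) / n))
        * ((Real.sqrt n : ℝ) : ℂ)⁻¹ := by
  rw [dftM]
  simp only [Matrix.of_apply, _root_.map_mul, ← Complex.exp_conj, map_div₀, map_inv₀,
    Complex.conj_ofReal, map_natCast, map_ofNat, Complex.conj_I]
  ring_nf

lemma conj_mul_self_dftM (n : ℕ) (j k : Fin n) :
    (starRingEnd ℂ) (dftM n j k) * dftM n j k = (n : ℂ)⁻¹ := by
  have hn : (0:ℝ) ≤ n := Nat.cast_nonneg n
  rw [conj_dftM, dftM]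
  simp only [Matrix.of_apply]
  rw [mul_mul_mul_comm, ← Complex.exp_add, neg_add_cancel, Complex.exp_zero, one_mul,
    ← Complex.ofReal_inv, ← Complex.ofReal_mul, ← mul_inv, Real.mul_self_sqrt hn]
  norm_num

lemma dftM_unitary (n : ℕ) : (dftM n)ᴴ * dftM n = 1 := by
  ext j k
  rw [Matrix.mul_apply]
  simp only [Matrix.conjTranspose_apply]
  set w : ℂ := Complex.exp (2 * Real.pi * Complex.I * (((k:ℕ):ℂ) - ((j:ℕ):ℂ)) / n) with hw
  have hn0 : (n : ℕ) ≠ 0 := (Fin.pos j).ne'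
  have hnC : (n : ℂ) ≠ 0 := Nat.cast_ne_zero.mpr hn0
  have hterm : ∀ m : Fin n, star (dftM n m j) * dftM n m k = w ^ (m : ℕ) * (n : ℂ)⁻¹ := by
    intro m
    rw [Complex.star_def, conj_dftM, dftM]
    simp only [Matrix.of_apply]
    rw [hw, ← Complex.exp_nat_mul, mul_mul_mul_comm, ← Complex.exp_add,
      ← Complex.ofReal_inv, ← Complex.ofReal_mul, ← mul_inv,
      Real.mul_self_sqrt (Nat.cast_nonneg n)]
    norm_num
    left
    ring
  rw [Finset.sum_congr rfl (fun m _ => hterm m), ← Finset.sum_mul]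
  have hsum : ∑ m : Fin n, w ^ (m : ℕ) = ∑ m ∈ Finset.range n, w ^ m :=
    Fin.sum_univ_eq_sum_range _ _
  rcases eq_or_ne j k with rfl | hjk
  · have hw1 : w = 1 := by
      rw [hw]
      norm_num
    rw [hsum, hw1]
    simp [Matrix.one_apply_eq, hnC]
  · have hw1 : w ≠ 1 := by
      rw [hw]
      intro h1
      rw [Complex.exp_eq_one_iff] at h1
      obtain ⟨m, hm⟩ := h1
      have h2pi : (2 * (Real.pi : ℂ) * Complex.I) ≠ 0 := by
        simp [Real.pi_ne_zero, Complex.I_ne_zero, Complex.ofReal_ne_zero]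
      have h3 : (2*(Real.pi:ℂ)*Complex.I) * (((k:ℕ):ℂ) - ((j:ℕ):ℂ))
          = (2*(Real.pi:ℂ)*Complex.I) * ((m:ℂ)*n) := by
        field_simp at hm
        linear_combination (2*(Real.pi:ℂ)*Complex.I) * hm
      have h2 : (((k:ℕ):ℂ) - ((j:ℕ):ℂ)) = (m:ℂ) * n := mul_left_cancel₀ h2pi h3
      have h4 : ((k:ℕ):ℤ) - ((j:ℕ):ℤ) = m * n := by exact_mod_cast h2
      have hjn : ((j:ℕ):ℤ) < n := by exact_mod_cast j.isLt
      have hkn : ((k:ℕ):ℤ) < n := by exact_mod_cast k.isLt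
      rcases le_or_gt 1 m with h | h
      · have h5 : (n:ℤ) ≤ m * n := le_mul_of_one_le_left (by positivity) h
        omega
      · rcases le_or_gt m (-1) with h' | h'
        · have h5 : m * n ≤ -1 * n := mul_le_mul_of_nonneg_right h' (by positivity)
          have h6 : m * n ≤ -(n:ℤ) := by omega
          omega
        · have hm0 : m = 0 := by omega
          rw [hm0] at h4
          exact hjk (Fin.ext (by omega))
    have hwn : w ^ n = 1 := by
      rw [hw, ← Complex.exp_nat_mul]
      have : (n:ℂ) * (2 * Real.pi * Complex.I * (((k:ℕ):ℂ) - ((j:ℕ):ℂ)) / n)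
          = (((k:ℕ):ℤ) - ((j:ℕ):ℤ) : ℤ) * (2 * Real.pi * Complex.I) := by
        push_cast
        field_simp
      rw [this, Complex.exp_int_mul_two_pi_mul_I]
    rw [hsum, geom_sum_eq hw1, hwn]
    simp [Matrix.one_apply_ne hjk]

lemma exists_unitary_hollow {n : ℕ} (B : Matrix (Fin n) (Fin n) ℂ) (hB : B.IsHermitian)
    (htr : B.trace = 0) :
    ∃ X : Matrix (Fin n) (Fin n) ℂ, Xᴴ * X = 1 ∧ ∀ i, (Xᴴ * B * X) i i = 0 := by
  classical
  set U : Matrix (Fin n) (Fin n) ℂ := (hB.eigenvectorUnitary : Matrix (Fin n) (Fin n) ℂ) with hUdef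
  set d : Fin n → ℂ := RCLike.ofReal ∘ hB.eigenvalues with hddef
  have hU : Uᴴ * U = 1 := by
    have := hB.eigenvectorUnitary.2
    rw [Matrix.mem_unitaryGroup_iff'] at this
    simpa [Matrix.star_eq_conjTranspose] using this
  have hU' : U * Uᴴ = 1 := by
    rw [mul_eq_one_comm] at hU
    exact hU
  have hdiag : Uᴴ * B * U = Matrix.diagonal d := by
    have := hB.conjStarAlgAut_star_eigenvectorUnitary
    rw [hUdef, hddef]
    simpa [Matrix.star_eq_conjTranspose, Unitary.conjStarAlgAut_star_apply] using this
  refine ⟨U * dftM n, ?_, ?_⟩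
  · rw [Matrix.conjTranspose_mul, Matrix.mul_assoc, ← Matrix.mul_assoc Uᴴ U,
      hU, Matrix.one_mul, dftM_unitary]
  · intro i
    have hkey : (U * dftM n)ᴴ * B * (U * dftM n) = (dftM n)ᴴ * Matrix.diagonal d * dftM n := by
      rw [Matrix.conjTranspose_mul]
      simp only [Matrix.mul_assoc]
      congr 1
      rw [← Matrix.mul_assoc, ← Matrix.mul_assoc, hdiag]
    rw [hkey, Matrix.mul_apply]
    have hterm : ∀ m : Fin n, ((dftM n)ᴴ * Matrix.diagonal d) i m * dftM n m i
        = d m * (n : ℂ)⁻¹ := by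
      intro m
      rw [Matrix.mul_diagonal, Matrix.conjTranspose_apply]
      rw [mul_comm (star (dftM n m i)) (d m), mul_assoc, Complex.star_def,
        conj_mul_self_dftM]
    rw [Finset.sum_congr rfl (fun m _ => hterm m), ← Finset.sum_mul]
    have hsum : ∑ m : Fin n, d m = 0 := by
      have h1 : (Matrix.diagonal d).trace = B.trace := by
        rw [← hdiag, Matrix.trace_mul_cycle, hU', Matrix.one_mul]
      rw [Matrix.trace_diagonal] at h1
      rw [h1, htr]
    rw [hsum, zero_mul]

theorem stmt_18 (n : ℕ)
    (A : Matrix (Fin n ⊕ Fin n) (Fin n ⊕ Fin n) ℂ)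
    (hA : A.IsHermitian) (htr : A.trace = 0) :
    ∃ U : Matrix (Fin n ⊕ Fin n) (Fin n ⊕ Fin n) ℂ,
      Uᴴ * U = 1 ∧
      Uᵀ * (Matrix.fromBlocks 0 1 (-1) 0) * U = Matrix.fromBlocks 0 1 (-1) 0 ∧
      ∀ i, (Uᴴ * A * U) i i = 0 := by
  classical
  have hAapply : ∀ i j, star (A j i) = A i j := fun i j => congrFun (congrFun hA i) j
  set B : Matrix (Fin n) (Fin n) ℂ := A.toBlocks₁₁ + (A.toBlocks₂₂)ᵀ with hBdef
  have hBherm : B.IsHermitian := by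
    ext i j
    simp only [hBdef, Matrix.conjTranspose_apply, Matrix.add_apply, Matrix.transpose_apply,
      Matrix.toBlocks₁₁, Matrix.toBlocks₂₂, Matrix.of_apply, star_add]
    rw [hAapply, hAapply]
  have hBtr : B.trace = 0 := by
    rw [← htr]
    simp [Matrix.trace, Matrix.diag, hBdef, Matrix.toBlocks₁₁, Matrix.toBlocks₂₂,
      Fintype.sum_sum_type, Finset.sum_add_distrib]
  obtain ⟨X, hX, hXdiag⟩ := exists_unitary_hollow B hBherm hBtr
  set Y : Matrix (Fin n) (Fin n) ℂ := Xᴴᵀ with hYdef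
  have hYt : Yᵀ = Xᴴ := by rw [hYdef, Matrix.transpose_transpose]
  have hYH : Yᴴ = Xᵀ := by
    ext i j
    simp [hYdef, Matrix.conjTranspose_apply, Matrix.transpose_apply]
  have hXY : Xᵀ * Y = 1 := by
    have h := congrArg Matrix.transpose hX
    rw [Matrix.transpose_mul, Matrix.transpose_one] at h
    exact h
  have hYX : Yᵀ * X = 1 := by rw [hYt]; exact hX
  have hYY : Yᴴ * Y = 1 := by rw [hYH]; exact hXY
  set V : Matrix (Fin n ⊕ Fin n) (Fin n ⊕ Fin n) ℂ := Matrix.fromBlocks X 0 0 Y with hVdef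
  have hVu : Vᴴ * V = 1 := by
    rw [hVdef, Matrix.fromBlocks_conjTranspose, Matrix.fromBlocks_multiply]
    simp only [Matrix.conjTranspose_zero, Matrix.mul_zero, Matrix.zero_mul, add_zero, zero_add,
      hX, hYY]
    exact Matrix.fromBlocks_one
  have hVs : Vᵀ * (Matrix.fromBlocks 0 1 (-1) 0) * V = Matrix.fromBlocks 0 1 (-1) 0 := by
    rw [hVdef, Matrix.fromBlocks_transpose, Matrix.fromBlocks_multiply,
      Matrix.fromBlocks_multiply]
    simp only [Matrix.transpose_zero, Matrix.mul_zero, Matrix.zero_mul, Matrix.mul_one,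
      Matrix.mul_neg, Matrix.neg_mul, add_zero, zero_add, Matrix.mul_zero, hXY, hYX, neg_zero]
  set C : Matrix (Fin n ⊕ Fin n) (Fin n ⊕ Fin n) ℂ := Vᴴ * A * V with hCdef
  have hCherm : ∀ x y, star (C y x) = C x y := by
    have h1 : Cᴴ = C := by
      rw [hCdef, Matrix.conjTranspose_mul, Matrix.conjTranspose_mul,
        Matrix.conjTranspose_conjTranspose, hA]
      simp [Matrix.mul_assoc]
    intro x y
    exact congrFun (congrFun h1 x) y
  have hCblocks : C = Matrix.fromBlocks (Xᴴ * A.toBlocks₁₁ * X) (Xᴴ * A.toBlocks₁₂ * Y)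
      (Yᴴ * A.toBlocks₂₁ * X) (Yᴴ * A.toBlocks₂₂ * Y) := by
    rw [hCdef, hVdef]
    conv_lhs => rw [← Matrix.fromBlocks_toBlocks A]
    rw [Matrix.fromBlocks_conjTranspose, Matrix.fromBlocks_multiply, Matrix.fromBlocks_multiply]
    simp only [Matrix.conjTranspose_zero, Matrix.mul_zero, Matrix.zero_mul, add_zero, zero_add]
  have key0 : ∀ i, C (Sum.inl i) (Sum.inl i) + C (Sum.inr i) (Sum.inr i) = 0 := by
    intro i
    rw [hCblocks]
    simp only [Matrix.fromBlocks_apply₁₁, Matrix.fromBlocks_apply₂₂]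
    have h2 : (Yᴴ * A.toBlocks₂₂ * Y) i i = (Xᴴ * (A.toBlocks₂₂)ᵀ * X) i i := by
      have h3 : (Xᴴ * (A.toBlocks₂₂)ᵀ * X)ᵀ = Yᴴ * A.toBlocks₂₂ * Y := by
        rw [Matrix.transpose_mul, Matrix.transpose_mul, Matrix.transpose_transpose, hYH, hYdef]
        rw [Matrix.mul_assoc]
      rw [← h3, Matrix.transpose_apply]
    rw [h2, ← Matrix.add_apply, ← Matrix.add_mul, ← Matrix.mul_add, ← hBdef]
    exact hXdiag i
  set b : Fin n → ℂ := fun i => C (Sum.inl i) (Sum.inr i) with hbdef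
  set ω : Fin n → ℂ := fun i =>
    Complex.I * (if b i = 0 then 1 else (starRingEnd ℂ) (b i) / ‖b i‖) with hωdef
  have hω1 : ∀ i, ω i * star (ω i) = 1 := by
    intro i
    by_cases h : b i = 0
    · simp [hωdef, h, Complex.star_def, Complex.conj_I]
    · have hr : ((‖b i‖ : ℝ) : ℂ) ≠ 0 := by
        simpa using (norm_ne_zero_iff.mpr h)
      have hb1 : (starRingEnd ℂ) (b i) * b i = ((‖b i‖ : ℝ) : ℂ) ^ 2 := by
        rw [mul_comm, Complex.mul_conj, Complex.normSq_eq_norm_sq, Complex.ofReal_pow]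
      simp only [hωdef, h, if_false, Complex.star_def, _root_.map_mul, map_div₀, map_inv₀,
        Complex.conj_I, Complex.conj_conj, Complex.conj_ofReal]
      field_simp
      linear_combination hb1 - ((starRingEnd ℂ) (b i) * b i) * Complex.I_sq
  have hω2 : ∀ i, ω i * b i + star (ω i) * star (b i) = 0 := by
    intro i
    by_cases h : b i = 0
    · simp [h]
    · simp only [hωdef, h, if_false, Complex.star_def, _root_.map_mul, map_div₀, map_inv₀,
        Complex.conj_I, Complex.conj_conj, Complex.conj_ofReal]
      ring
  set c : ℂ := ((Real.sqrt 2 : ℝ) : ℂ)⁻¹ with hcdef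
  have hcc : c * c = (2 : ℂ)⁻¹ := by
    rw [hcdef, ← Complex.ofReal_inv, ← Complex.ofReal_mul, ← mul_inv,
      Real.mul_self_sqrt (by norm_num)]
    norm_num
  have hcstar : star c = c := by
    rw [hcdef, ← Complex.ofReal_inv]
    exact Complex.conj_ofReal _
  set W : Matrix (Fin n ⊕ Fin n) (Fin n ⊕ Fin n) ℂ :=
    Matrix.fromBlocks (Matrix.diagonal fun _ => c) (Matrix.diagonal fun i => -star (ω i) * c)
      (Matrix.diagonal fun i => ω i * c) (Matrix.diagonal fun _ => c) with hWdef
  have hWH : Wᴴ = Matrix.fromBlocks (Matrix.diagonal fun _ => c)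
      (Matrix.diagonal fun i => star (ω i) * c)
      (Matrix.diagonal fun i => -(ω i) * c) (Matrix.diagonal fun _ => c) := by
    rw [hWdef, Matrix.fromBlocks_conjTranspose]
    simp only [Matrix.diagonal_conjTranspose, Pi.star_def, star_mul', star_neg, star_star,
      hcstar]
  have hWu : Wᴴ * W = 1 := by
    rw [hWH, hWdef, Matrix.fromBlocks_multiply]
    simp only [Matrix.diagonal_mul_diagonal, Matrix.diagonal_add]
    have e11 : (fun i => c * c + star (ω i) * c * (ω i * c)) = fun _ : Fin n => (1:ℂ) := by
      funext i
      linear_combination (c * c) * hω1 i + 2 * hcc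
    have e12 : (fun i => c * (-star (ω i) * c) + star (ω i) * c * c) = fun _ : Fin n => (0:ℂ) := by
      funext i
      ring
    have e21 : (fun i => -ω i * c * c + c * (ω i * c)) = fun _ : Fin n => (0:ℂ) := by
      funext i
      ring
    have e22 : (fun i => -ω i * c * (-star (ω i) * c) + c * c) = fun _ : Fin n => (1:ℂ) := by
      funext i
      linear_combination (c * c) * hω1 i + 2 * hcc
    rw [e11, e12, e21, e22, Matrix.diagonal_one, Matrix.diagonal_zero,
      Matrix.fromBlocks_one]
  have hWs : Wᵀ * (Matrix.fromBlocks 0 1 (-1) 0) * W = Matrix.fromBlocks 0 1 (-1) 0 := by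
    rw [hWdef, Matrix.fromBlocks_transpose]
    simp only [Matrix.diagonal_transpose]
    rw [Matrix.fromBlocks_multiply, Matrix.fromBlocks_multiply]
    simp only [Matrix.mul_zero, Matrix.zero_mul, Matrix.mul_one, Matrix.mul_neg,
      Matrix.neg_mul, add_zero, zero_add, Matrix.diagonal_mul_diagonal, neg_zero,
      Matrix.diagonal_neg, Matrix.diagonal_add]
    have g11 : (fun i => -(ω i * c) * c + c * (ω i * c)) = fun _ : Fin n => (0:ℂ) :=
      funext fun i => by ring
    have g12 : (fun i => -(ω i * c) * (-star (ω i) * c) + c * c) = fun _ : Fin n => (1:ℂ) :=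
      funext fun i => by linear_combination (c * c) * hω1 i + 2 * hcc
    have g21 : (fun i => -c * c + -star (ω i) * c * (ω i * c)) = fun _ : Fin n => (-1:ℂ) :=
      funext fun i => by linear_combination (-(c * c)) * hω1 i - 2 * hcc
    have g22 : (fun i => -c * (-star (ω i) * c) + -star (ω i) * c * c) = fun _ : Fin n => (0:ℂ) :=
      funext fun i => by ring
    have hm1 : Matrix.diagonal (fun _ : Fin n => (-1:ℂ)) = -1 := by
      rw [show (fun _ : Fin n => (-1:ℂ)) = (fun i => -(fun _ : Fin n => (1:ℂ)) i) from rfl,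
        ← Matrix.diagonal_neg, Matrix.diagonal_one]
    rw [g11, g12, g21, g22, Matrix.diagonal_zero, Matrix.diagonal_one, hm1]
  refine ⟨V * W, ?_, ?_, ?_⟩
  · rw [Matrix.conjTranspose_mul, Matrix.mul_assoc, ← Matrix.mul_assoc Vᴴ V, hVu,
      Matrix.one_mul, hWu]
  · rw [Matrix.transpose_mul,
      show Wᵀ * Vᵀ * Matrix.fromBlocks 0 1 (-1) 0 * (V * W)
        = Wᵀ * (Vᵀ * Matrix.fromBlocks 0 1 (-1) 0 * V) * W by
          simp only [Matrix.mul_assoc], hVs, hWs]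
  · intro x
    have hconj : (V * W)ᴴ * A * (V * W) = Wᴴ * C * W := by
      rw [Matrix.conjTranspose_mul, hCdef]
      simp only [Matrix.mul_assoc]
    rw [hconj]
    have hCb : C = Matrix.fromBlocks C.toBlocks₁₁ C.toBlocks₁₂ C.toBlocks₂₁ C.toBlocks₂₂ :=
      (Matrix.fromBlocks_toBlocks C).symm
    rw [hWH]
    conv_lhs => rw [hCb, hWdef]
    rw [Matrix.fromBlocks_multiply, Matrix.fromBlocks_multiply]
    have hb : ∀ i, ω i * C.toBlocks₁₂ i i + star (ω i) * star (C.toBlocks₁₂ i i) = 0 := by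
      intro i
      have h2 := hω2 i
      simp only [hbdef] at h2
      simpa [Matrix.toBlocks₁₂] using h2
    have hherm : ∀ i, C.toBlocks₂₁ i i = star (C.toBlocks₁₂ i i) := by
      intro i
      simp only [Matrix.toBlocks₁₂, Matrix.toBlocks₂₁, Matrix.of_apply]
      exact (hCherm (Sum.inr i) (Sum.inl i)).symm
    have hk0 : ∀ i, C.toBlocks₁₁ i i + C.toBlocks₂₂ i i = 0 := by
      intro i
      simpa [Matrix.toBlocks₁₁, Matrix.toBlocks₂₂] using key0 i
    rcases x with i | i
    · simp only [Matrix.fromBlocks_apply₁₁, Matrix.add_mul, Matrix.add_apply,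
        Matrix.mul_diagonal, Matrix.diagonal_mul]
      rw [hherm i]
      linear_combination (c * c) * hk0 i + (c * c) * hb i
        + (c * c * (C.toBlocks₂₂ i i)) * hω1 i
    · simp only [Matrix.fromBlocks_apply₂₂, Matrix.add_mul, Matrix.add_apply,
        Matrix.mul_diagonal, Matrix.diagonal_mul]
      rw [hherm i]
      linear_combination (c * c) * hk0 i + (c * c * (C.toBlocks₁₁ i i)) * hω1 i
        - (c * c) * hb i
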